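/- Every involution y in S_n admits an involution word: there exists a sequence of simple transpositions s_{a_1},…,s_{a_k} such that y = ((1 ⋊ s_{a_1}) ⋊ s_{a_2}) ⋊ ⋯ ⋊ s_{a_k}, and any such sequence of minimal length has length equal to (ℓ(y) + κ(y))/2, where κ(y) is the number of 2-cycles of y. -/

import Mathlib

/-- The Coxeter length of a permutation of `Fin n`, i.e. its number of inversions. -/
def ell {n : ℕ} (w : Equiv.Perm (Fin n)) : ℕ :=
  (Finset.univ.filter (fun p : Fin n × Fin n => p.1 < p.2 ∧ w p.2 < w p.1)).card

/-- The number of two-cycles of an involution `y`. -/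
def kap {n : ℕ} (y : Equiv.Perm (Fin n)) : ℕ :=
  (Finset.univ.filter (fun i : Fin n => i < y i)).card

/-- `s` is a simple transposition `(i, i+1)` of `Fin n`. -/
def IsSimple {n : ℕ} (s : Equiv.Perm (Fin n)) : Prop :=
  ∃ i : ℕ, ∃ h : i + 1 < n, s = Equiv.swap ⟨i, Nat.lt_of_succ_lt h⟩ ⟨i + 1, h⟩

/-- The Richardson–Springer operation `g ⋊ s`. -/
def smult {n : ℕ} (g s : Equiv.Perm (Fin n)) : Equiv.Perm (Fin n) :=
  if s * g = g * s then g * s else s * g * s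

/-!
For an involution `y` and an adjacent transposition `s = (a a+1)`, `y ⋊ s` is an involution,
`(y ⋊ s) ⋊ s = y`, and `ℓ + κ` changes by exactly `±2`, upwards iff `y a < y (a+1)`: if `s`
commutes with `y` then `y` fixes or swaps `a, a+1` and `ℓ`, `κ` both move by one; otherwise
`y ⋊ s = s y s` is a conjugate, so `κ` is unchanged while `ℓ` moves by two. Hence every word
for `y` has length at least `(ℓ + κ)(y) / 2`, and descending along descents of `y` gives a word
of exactly that length.
-/

open Equiv Finset

section
variable {n : ℕ}

lemma swap_apply_lt_swap_apply {a b x y : Fin n} (hab : (a : ℕ) + 1 = b) (hxy : x < y)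
    (hne : (x, y) ≠ (a, b)) :
    swap a b x < swap a b y := by
  simp only [ne_eq, Prod.mk.injEq] at hne
  rw [swap_apply_def, swap_apply_def]
  split_ifs <;> simp only [Fin.ext_iff, Fin.lt_def] at * <;> omega

def inversionSet (w : Perm (Fin n)) : Finset (Fin n × Fin n) :=
  {p | p.1 < p.2 ∧ w p.2 < w p.1}

@[simp]
lemma mem_inversionSet {w : Perm (Fin n)} {p : Fin n × Fin n} :
    p ∈ inversionSet w ↔ p.1 < p.2 ∧ w p.2 < w p.1 := by
  simp [inversionSet]

lemma ell_eq_card_inversionSet (w : Perm (Fin n)) : ell w = #(inversionSet w) := rfl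

lemma ell_one : ell (1 : Perm (Fin n)) = 0 := by
  simp only [ell_eq_card_inversionSet, card_eq_zero, eq_empty_iff_forall_notMem, mem_inversionSet,
    Perm.one_apply]
  exact fun p ⟨h, h'⟩ => lt_asymm h h'

lemma kap_one : kap (1 : Perm (Fin n)) = 0 := by
  simp [kap]

lemma ell_inv (w : Perm (Fin n)) : ell w⁻¹ = ell w := by
  rw [ell_eq_card_inversionSet, ell_eq_card_inversionSet,
    ← card_map ((prodComm _ _).trans (w⁻¹.prodCongr w⁻¹)).toEmbedding]
  congr 1
  ext ⟨x, y⟩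
  rw [mem_map_equiv]
  simp [Perm.inv_def, and_comm]

lemma ell_mul_swap_of_lt {a b : Fin n} (hab : (a : ℕ) + 1 = b) {w : Perm (Fin n)}
    (h : w a < w b) : ell (w * swap a b) = ell w + 1 := by
  have hlt : a < b := by rw [Fin.lt_def]; omega
  have hmem : (a, b) ∈ inversionSet (w * swap a b) := by simpa [hlt] using h
  have herase : (inversionSet (w * swap a b)).erase (a, b) =
      (inversionSet w).map ((swap a b).prodCongr (swap a b)).toEmbedding := by
    ext ⟨x, y⟩
    rw [mem_map_equiv]
    simp only [mem_erase, mem_inversionSet, prodCongr_symm, symm_swap, prodCongr_apply, Prod.map,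
      Perm.mul_apply]
    constructor
    · rintro ⟨hne, hxy, hw⟩
      exact ⟨swap_apply_lt_swap_apply hab hxy hne, hw⟩
    · rintro ⟨hxy, hw⟩
      have hne : (swap a b x, swap a b y) ≠ (a, b) := by
        intro he
        simp only [Prod.mk.injEq] at he
        rw [he.1, he.2] at hw
        exact lt_asymm h hw
      refine ⟨?_, by simpa using swap_apply_lt_swap_apply hab hxy hne, hw⟩
      rintro ⟨rfl, rfl⟩
      simp only [swap_apply_left, swap_apply_right] at hxy
      exact lt_asymm hlt hxy
  rw [ell_eq_card_inversionSet, ell_eq_card_inversionSet, ← card_erase_add_one hmem, herase,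
    card_map]

lemma ell_mul_swap_of_gt {a b : Fin n} (hab : (a : ℕ) + 1 = b) {w : Perm (Fin n)}
    (h : w b < w a) : ell (w * swap a b) + 1 = ell w := by
  have := ell_mul_swap_of_lt hab (w := w * swap a b) (by simpa using h)
  rwa [mul_swap_mul_self, eq_comm] at this

lemma ell_swap_mul_of_lt {a b : Fin n} (hab : (a : ℕ) + 1 = b) {w : Perm (Fin n)}
    (h : w⁻¹ a < w⁻¹ b) : ell (swap a b * w) = ell w + 1 := by
  rw [← ell_inv, mul_inv_rev, swap_inv, ell_mul_swap_of_lt hab h, ell_inv]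

lemma ell_swap_mul_of_gt {a b : Fin n} (hab : (a : ℕ) + 1 = b) {w : Perm (Fin n)}
    (h : w⁻¹ b < w⁻¹ a) : ell (swap a b * w) + 1 = ell w := by
  rw [← ell_inv, mul_inv_rev, swap_inv, ell_mul_swap_of_gt hab h, ell_inv]

lemma two_mul_kap_eq_card_support {y : Perm (Fin n)} (hy : y * y = 1) :
    2 * kap y = #y.support := by
  have hinv : y⁻¹ = y := (eq_inv_of_mul_eq_one_left hy).symm
  have hdown :
      (univ.filter fun i => i < y i).map y.toEmbedding = univ.filter fun i => y i < i := by
    ext i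
    rw [mem_map_equiv]
    simp [← Perm.inv_def, hinv, ← Perm.mul_apply, hy]
  have hsupp : y.support = (univ.filter fun i => i < y i) ∪ univ.filter fun i => y i < i := by
    ext i
    simp [ne_comm (a := y i), lt_or_lt_iff_ne]
  rw [hsupp, card_union_of_disjoint (disjoint_filter.2 fun i _ h => (lt_asymm h)), ← hdown,
    card_map, kap, two_mul]

lemma kap_conj {y : Perm (Fin n)} (hy : y * y = 1) (σ : Perm (Fin n)) :
    kap (σ * y * σ⁻¹) = kap y := by
  have hconj : σ * y * σ⁻¹ * (σ * y * σ⁻¹) = 1 := by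
    rw [show σ * y * σ⁻¹ * (σ * y * σ⁻¹) = σ * (y * y) * σ⁻¹ by group, hy, mul_one,
      mul_inv_cancel]
  have h := two_mul_kap_eq_card_support hconj
  rw [Perm.card_support_conj, ← two_mul_kap_eq_card_support hy] at h
  omega

lemma kap_mul_swap_of_fixed {a b : Fin n} (hab : a < b) {y : Perm (Fin n)}
    (ha : y a = a) (hb : y b = b) : kap (y * swap a b) = kap y + 1 := by
  have hinsert : (univ.filter fun i => i < (y * swap a b) i) =
      insert a (univ.filter fun i => i < y i) := by
    ext i
    simp only [mem_filter, mem_univ, true_and, mem_insert]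
    rw [Perm.mul_apply]
    rcases eq_or_ne i a with rfl | hia
    · simpa [hb] using hab
    rcases eq_or_ne i b with rfl | hib
    · simp [ha, hb, hab.ne', lt_asymm hab]
    · simp [swap_apply_of_ne_of_ne hia hib, hia]
  rw [kap, hinsert, card_insert_of_notMem (by simp [ha]), kap]

lemma commute_swap_of_apply_eq {a b : Fin n} {y : Perm (Fin n)} (ha : y a = a) (hb : y b = b) :
    Commute (swap a b) y := by
  rw [Commute, SemiconjBy, mul_swap_eq_swap_mul, ha, hb]

lemma commute_swap_of_apply_eq_swap {a b : Fin n} {y : Perm (Fin n)} (ha : y a = b)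
    (hb : y b = a) : Commute (swap a b) y := by
  rw [Commute, SemiconjBy, mul_swap_eq_swap_mul, ha, hb, swap_comm]

lemma apply_eq_or_of_commute_swap {a b : Fin n} (hab : a ≠ b) {y : Perm (Fin n)}
    (hc : Commute (swap a b) y) : (y a = a ∧ y b = b) ∨ (y a = b ∧ y b = a) := by
  have hya : swap a b (y a) = y b := by simpa using congr($hc a)
  by_cases ha : y a = a
  · exact .inl ⟨ha, by rw [← hya, ha, swap_apply_left]⟩
  by_cases hb : y a = b
  · exact .inr ⟨hb, by rw [← hya, hb, swap_apply_right]⟩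
  rw [swap_apply_of_ne_of_ne ha hb] at hya
  exact absurd (y.injective hya) hab

lemma smult_mul_self {y s : Perm (Fin n)} (hy : y * y = 1) (hs : s * s = 1) :
    smult y s * smult y s = 1 := by
  unfold smult
  split_ifs with hc
  · rw [show y * s * (y * s) = y * (s * y) * s by group, hc,
      show y * (y * s) * s = y * y * (s * s) by group, hy, hs, one_mul]
  · rw [show s * y * s * (s * y * s) = s * y * (s * s) * y * s by group, hs, mul_one,
      show s * y * y * s = s * (y * y) * s by group, hy, mul_one, hs]

lemma smult_smult {y s : Perm (Fin n)} (hs : s * s = 1) : smult (smult y s) s = y := by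
  have hleft : s * (s * y * s) = y * s := by rw [← mul_assoc, ← mul_assoc, hs, one_mul]
  have hright : s * y * s * s = s * y := by rw [mul_assoc, hs, mul_one]
  unfold smult
  split_ifs with hc hc' hc'
  · rw [mul_assoc, hs, mul_one]
  · exact absurd (by rw [← mul_assoc, hc]) hc'
  · exact absurd (hright ▸ hleft ▸ hc').symm hc
  · rw [hleft, mul_assoc, hs, mul_one]

lemma ell_add_kap_smult_of_lt {a b : Fin n} (hab : (a : ℕ) + 1 = b) {y : Perm (Fin n)}
    (hy : y * y = 1) (h : y a < y b) :
    ell (smult y (swap a b)) + kap (smult y (swap a b)) = ell y + kap y + 2 := by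
  have hlt : a < b := by rw [Fin.lt_def]; omega
  unfold smult
  split_ifs with hc
  · obtain ⟨ha, hb⟩ | ⟨ha, hb⟩ := apply_eq_or_of_commute_swap hlt.ne hc
    · rw [ell_mul_swap_of_lt hab h, kap_mul_swap_of_fixed hlt ha hb]
      ring
    · rw [ha, hb] at h
      exact absurd h (lt_asymm hlt)
  · have hinv : (y * swap a b)⁻¹ = swap a b * y := by
      rw [mul_inv_rev, swap_inv, ← eq_inv_of_mul_eq_one_left hy]
    have hne : (y a, y b) ≠ (a, b) := fun he =>
      hc (commute_swap_of_apply_eq (Prod.mk.inj he).1 (Prod.mk.inj he).2)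
    have hdesc : (y * swap a b)⁻¹ a < (y * swap a b)⁻¹ b := by
      simpa [hinv] using swap_apply_lt_swap_apply hab h hne
    have hkap := kap_conj hy (swap a b)
    rw [swap_inv] at hkap
    rw [hkap, mul_assoc, ell_swap_mul_of_lt hab hdesc, ell_mul_swap_of_lt hab h]
    ring

lemma ell_add_kap_smult_of_gt {a b : Fin n} (hab : (a : ℕ) + 1 = b) {y : Perm (Fin n)}
    (hy : y * y = 1) (h : y b < y a) :
    ell (smult y (swap a b)) + kap (smult y (swap a b)) + 2 = ell y + kap y := by
  have hlt : a < b := by rw [Fin.lt_def]; omega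
  unfold smult
  split_ifs with hc
  · obtain ⟨ha, hb⟩ | ⟨ha, hb⟩ := apply_eq_or_of_commute_swap hlt.ne hc
    · rw [ha, hb] at h
      exact absurd h (lt_asymm hlt)
    · have hkap := kap_mul_swap_of_fixed hlt (y := y * swap a b) (by simpa using hb)
        (by simpa using ha)
      rw [mul_swap_mul_self] at hkap
      rw [← ell_mul_swap_of_gt hab h, hkap]
      ring
  · have hinv : (y * swap a b)⁻¹ = swap a b * y := by
      rw [mul_inv_rev, swap_inv, ← eq_inv_of_mul_eq_one_left hy]
    have hne : (y b, y a) ≠ (a, b) := fun he =>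
      hc (commute_swap_of_apply_eq_swap (Prod.mk.inj he).2 (Prod.mk.inj he).1)
    have hdesc : (y * swap a b)⁻¹ b < (y * swap a b)⁻¹ a := by
      simpa [hinv] using swap_apply_lt_swap_apply hab h hne
    have hkap := kap_conj hy (swap a b)
    rw [swap_inv] at hkap
    rw [hkap, mul_assoc, ← ell_mul_swap_of_gt hab h, ← ell_swap_mul_of_gt hab hdesc]
    ring

lemma Equiv.Perm.eq_one_of_strictMono {w : Perm (Fin n)} (hw : StrictMono w) : w = 1 := by
  refine Equiv.ext fun x => ?_
  simpa using DFunLike.congr_fun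
    (Subsingleton.elim (hw.orderIsoOfSurjective w w.surjective) (OrderIso.refl _)) x

lemma exists_descent_of_ne_one {w : Perm (Fin n)} (hw : w ≠ 1) :
    ∃ a b : Fin n, (a : ℕ) + 1 = b ∧ w b < w a := by
  by_contra! h
  refine hw (Perm.eq_one_of_strictMono ?_)
  cases n with
  | zero => exact fun x => x.elim0
  | succ m =>
    exact Fin.strictMono_iff_lt_succ.2 fun i =>
      (h _ _ rfl).lt_of_ne (w.injective.ne (Fin.castSucc_lt_succ (i := i)).ne)

lemma isSimple_iff {s : Perm (Fin n)} :
    IsSimple s ↔ ∃ a b : Fin n, (a : ℕ) + 1 = b ∧ s = swap a b := by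
  constructor
  · rintro ⟨i, h, rfl⟩
    exact ⟨_, _, rfl, rfl⟩
  · rintro ⟨a, b, hab, rfl⟩
    exact ⟨a, hab ▸ b.isLt, by congr; exact Fin.ext hab.symm⟩

lemma IsSimple.mul_self {s : Perm (Fin n)} (hs : IsSimple s) : s * s = 1 := by
  obtain ⟨i, h, rfl⟩ := hs
  exact swap_mul_self _ _

lemma ell_add_kap_smult_le {y s : Perm (Fin n)} (hy : y * y = 1) (hs : IsSimple s) :
    ell (smult y s) + kap (smult y s) ≤ ell y + kap y + 2 := by
  obtain ⟨a, b, hab, rfl⟩ := isSimple_iff.1 hs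
  have hne : y a ≠ y b := y.injective.ne (Fin.ne_of_val_ne (by omega))
  rcases hne.lt_or_gt with h | h
  · exact (ell_add_kap_smult_of_lt hab hy h).le
  · have := ell_add_kap_smult_of_gt hab hy h
    omega

lemma ell_add_kap_foldl_smult_le {L : List (Perm (Fin n))} (hL : ∀ s ∈ L, IsSimple s)
    {y : Perm (Fin n)} (hy : y * y = 1) :
    ell (L.foldl smult y) + kap (L.foldl smult y) ≤ ell y + kap y + 2 * L.length := by
  induction L generalizing y with
  | nil => simp
  | cons s L ih =>
    simp only [List.forall_mem_cons] at hL
    have := ih hL.2 (smult_mul_self hy hL.1.mul_self)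
    have := ell_add_kap_smult_le hy hL.1
    simp only [List.foldl_cons, List.length_cons]
    omega

lemma exists_word_two_mul_length_eq {y : Perm (Fin n)} (hy : y * y = 1) :
    ∃ L : List (Perm (Fin n)), (∀ s ∈ L, IsSimple s) ∧ L.foldl smult 1 = y ∧
      2 * L.length = ell y + kap y := by
  induction hm : ell y + kap y using Nat.strong_induction_on generalizing y with
  | _ m ih =>
    by_cases h1 : y = 1
    · subst h1
      exact ⟨[], by simp, rfl, by simp [← hm, ell_one, kap_one]⟩
    obtain ⟨a, b, hab, hdesc⟩ := exists_descent_of_ne_one h1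
    have hdrop := ell_add_kap_smult_of_gt hab hy hdesc
    obtain ⟨L, hL, hLy, hLlen⟩ :=
      ih _ (by omega) (smult_mul_self hy (swap_mul_self a b)) rfl
    refine ⟨L ++ [swap a b], ?_, ?_, ?_⟩
    · simp only [List.forall_mem_append, List.forall_mem_singleton]
      exact ⟨hL, isSimple_iff.2 ⟨a, b, hab, rfl⟩⟩
    · rw [List.foldl_append, hLy, List.foldl_cons, List.foldl_nil,
        smult_smult (swap_mul_self a b)]
    · simp only [List.length_append, List.length_singleton]
      omega

end

/-- Every involution `y` of `S_n` admits an involution word (a sequence of simple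
transpositions producing `y` from the identity via `⋊`), and any such sequence of
minimal length has length `(ℓ(y) + κ(y))/2`. -/
theorem stmt2 {n : ℕ} (y : Equiv.Perm (Fin n)) (hy : y * y = 1) :
    (∃ L : List (Equiv.Perm (Fin n)), (∀ s ∈ L, IsSimple s) ∧ L.foldl smult 1 = y) ∧
    (∀ L : List (Equiv.Perm (Fin n)), (∀ s ∈ L, IsSimple s) → L.foldl smult 1 = y →
      (∀ L' : List (Equiv.Perm (Fin n)), (∀ s ∈ L', IsSimple s) → L'.foldl smult 1 = y →
        L.length ≤ L'.length) →
      2 * L.length = ell y + kap y) := by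
  obtain ⟨L₀, hL₀, hL₀y, hL₀len⟩ := exists_word_two_mul_length_eq hy
  refine ⟨⟨L₀, hL₀, hL₀y⟩, fun L hL hLy hmin => ?_⟩
  have hle := hmin L₀ hL₀ hL₀y
  have hbound := ell_add_kap_foldl_smult_le hL (one_mul (1 : Perm (Fin n)))
  rw [hLy, ell_one, kap_one] at hbound
  omega
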